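/- arXiv:2403.17450 — 2 statements merged into one kernel-verified Lean document; each statement's English description precedes it below -/
import Mathlib

section
/- Let f : X → ℝ ∪ {+∞} be strongly convex with modulus γ > 0 with unique minimizer x̄, and suppose x satisfies f(x) < f(x₀) and f(x) − f(x̄) ≤ (μ/2)(f(x₀) − f(x)). Then ‖x₀ − x‖² ≤ (4(1+μ)/γ)(f(x₀) − f(x)). -/
theorem stmt5 {X : Type*} [NormedAddCommGroup X] [InnerProductSpace ℝ X]
    [FiniteDimensional ℝ X] (f : X → ℝ) (γ μ : ℝ) (hγ : 0 < γ) (hμ : 0 ≤ μ)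
    (hlsc : LowerSemicontinuous f)
    (hconv : ConvexOn ℝ Set.univ (fun x => f x - γ / 2 * ‖x‖ ^ 2))
    (xbar : X) (hmin : ∀ y : X, f xbar ≤ f y)
    (x₀ x : X) (hlt : f x < f x₀)
    (hin : f x - f xbar ≤ μ / 2 * (f x₀ - f x)) :
    ‖x₀ - x‖ ^ 2 ≤ 4 * (1 + μ) / γ * (f x₀ - f x) := by
  have hSC : StrongConvexOn Set.univ γ f := strongConvexOn_iff_convex.mpr hconv
  -- key estimate: γ/2 ‖y - xbar‖² ≤ f y - f xbar
  have key : ∀ y : X, γ / 2 * ‖y - xbar‖ ^ 2 ≤ f y - f xbar := by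
    intro y
    have step : ∀ t : ℝ, 0 < t → t ≤ 1 →
        (1 - t) * (γ / 2 * ‖y - xbar‖ ^ 2) ≤ f y - f xbar := by
      intro t ht ht1
      have h := hSC.2 (Set.mem_univ y) (Set.mem_univ xbar) ht.le
        (by linarith : (0:ℝ) ≤ 1 - t) (by ring)
      have hm := hmin (t • y + (1 - t) • xbar)
      simp only [smul_eq_mul] at h
      nlinarith [h, hm]
    by_contra hcon
    push_neg at hcon
    set A := γ / 2 * ‖y - xbar‖ ^ 2 with hA
    set B := f y - f xbar with hB
    have hA0 : 0 < A := lt_of_le_of_lt (by nlinarith [hmin y, sq_nonneg ‖y - xbar‖]) hcon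
    have hB0 : 0 ≤ B := by have := hmin y; simp [hB]; linarith
    -- pick t = (A - B)/(2*A) ∈ (0,1]
    have ht : 0 < (A - B) / (2 * A) := div_pos (by linarith) (by linarith)
    have ht1 : (A - B) / (2 * A) ≤ 1 := by
      rw [div_le_one (by linarith)]; linarith
    have hstep := step _ ht ht1
    have h1 : (1 - (A - B) / (2 * A)) * A = (A + B) / 2 := by
      field_simp; ring
    rw [h1] at hstep
    linarith
  have k0 : γ / 2 * ‖x₀ - xbar‖ ^ 2 ≤ f x₀ - f xbar := key x₀
  have k1 : γ / 2 * ‖x - xbar‖ ^ 2 ≤ f x - f xbar := key x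
  have htri : ‖x₀ - x‖ ^ 2 ≤ 2 * ‖x₀ - xbar‖ ^ 2 + 2 * ‖x - xbar‖ ^ 2 := by
    have h := norm_add_le (x₀ - xbar) (xbar - x)
    have heq : (x₀ - xbar) + (xbar - x) = x₀ - x := by abel
    rw [heq] at h
    have h2 : ‖xbar - x‖ = ‖x - xbar‖ := norm_sub_rev _ _
    nlinarith [sq_nonneg (‖x₀ - xbar‖ - ‖x - xbar‖), norm_nonneg (x₀ - x)]
  have hfx0 : f x₀ - f xbar ≤ (1 + μ / 2) * (f x₀ - f x) := by linarith
  have hpos : 0 < f x₀ - f x := by linarith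
  have : γ / 2 * ‖x₀ - x‖ ^ 2 ≤ 2 * (1 + μ) * (f x₀ - f x) := by nlinarith
  rw [div_mul_eq_mul_div, le_div_iff₀ hγ] at *
  nlinarith
end

section
/- Let {Δ_k} be a nonincreasing nonnegative sequence and {b_k} a nonnegative sequence satisfying 2√(b_k) ≤ α Δ_k + √(b_{k-1}) for all k ≥ k̄, where Δ_k := φ_k − φ_{k+1} for a nonincreasing nonnegative sequence {φ_k}. Then Σ_{k≥k̄} √(b_k) < ∞. -/
theorem stmt9 (φ b : ℕ → ℝ) (α : ℝ) (kbar : ℕ) (hα : 0 < α) (hkbar : 1 ≤ kbar)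
    (hφ0 : ∀ k, 0 ≤ φ k) (hφmono : Antitone φ) (hb : ∀ k, 0 ≤ b k)
    (hrec : ∀ k, kbar ≤ k →
      2 * Real.sqrt (b k) ≤ α * (φ k - φ (k + 1)) + Real.sqrt (b (k - 1))) :
    Summable (fun k => Real.sqrt (b k)) := by
  rw [← summable_nat_add_iff kbar]
  have key : ∀ n, ∑ i ∈ Finset.range n, Real.sqrt (b (i + kbar)) ≤
      α * (φ kbar - φ (n + kbar)) + Real.sqrt (b (kbar - 1)) -
        Real.sqrt (b (n + kbar - 1)) := by
    intro n
    induction n with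
    | zero => simp
    | succ n ih =>
      rw [Finset.sum_range_succ]
      have hk := hrec (n + kbar) (by omega)
      have h1 : n + kbar - 1 + 1 = n + kbar := by omega
      have h2 : n + 1 + kbar - 1 = n + kbar := by omega
      have h3 : n + kbar + 1 = n + 1 + kbar := by omega
      simp only [h2, h3] at hk ⊢
      nlinarith [ih]
  apply summable_of_sum_range_le (c := α * φ kbar + Real.sqrt (b (kbar - 1)))
    (fun n => Real.sqrt_nonneg _)
  intro n
  have := key n
  have h4 : 0 ≤ φ (n + kbar) := hφ0 _
  have h5 : 0 ≤ Real.sqrt (b (n + kbar - 1)) := Real.sqrt_nonneg _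
  nlinarith
end
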